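/- arXiv:2003.12239 — 2 statements merged into one kernel-verified Lean document; each statement's English description precedes it below -/
import Mathlib

section
/- Let T̂^π be an empirical Bellman operator for policy π whose constant step-size updates f_{n+1} = (1−α)f_n + αT̂^π(f_n,ω_n) converge to a stationary distribution ψ_α with finite second moment. Define the noise ξ_ω(f) = T̂^π(f,ω) − T^π f and its covariance C(f) = E_ω[ξ_ω(f)ξ_ω(f)^T]. Then the covariance Σ = E[(f_α − f^π)(f_α − f^π)^T] of f_α ∼ ψ_α satisfies (1−(1−α)²)Σ = α²(γP^π)Σ(γP^π)^T + α(1−α)(γP^π)Σ + α(1−α)Σ(γP^π)^T + α² ∫ C(f) ψ_α(df). -/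
/-!
Run one step of the update from stationarity: with `f ∼ ψ_α` and `ω ∼ η` independent,
`f' = (1 - α) f + α T̂(f, ω)` is again distributed as `ψ_α`. Since `T^π` is affine with fixed
point `f^π`, centring at `f^π` gives `f' - f^π = (1 - α) u + α (ξ + γ P^π u)` with `u = f - f^π`
and `ξ = T̂(f, ω) - T^π f`. The noise `ξ` has mean zero given `f`, so by Fubini it is
uncorrelated with every function of `f`. Expanding the second moment of `f' - f^π`, which is
again `Σ`, leaves exactly the terms of the identity.
-/

open MeasureTheory Matrix

namespace MeasureTheory.Measure

variable {α β γ : Type*} [MeasurableSpace α] [MeasurableSpace β] [MeasurableSpace γ]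
  {μ : Measure α} {ν : Measure β} [SFinite ν]

lemma bind_map_eq_map_prod {F : α → β → γ} (hF : Measurable (Function.uncurry F)) :
    μ.bind (fun a => ν.map (F a)) = (μ.prod ν).map (Function.uncurry F) := by
  have hmap : (fun a => ν.map (F a))
      = (fun ρ => ρ.map (Function.uncurry F)) ∘ fun a => ν.map (Prod.mk a) := by
    funext a
    simp only [Function.comp_apply]
    rw [map_map hF measurable_prodMk_left]
    rfl
  ext s hs
  rw [bind_apply hs, map_apply hF hs, prod_apply (hF hs)]
  · refine lintegral_congr fun a => ?_
    exact map_apply (hF.comp measurable_prodMk_left) hs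
  · rw [hmap]
    exact ((measurable_map _ hF).comp Measurable.map_prodMk_left).aemeasurable

lemma bind_map_eq_map_prod_of_aemeasurable {F : α → β → γ}
    (hF : AEMeasurable (Function.uncurry F) (μ.prod ν)) :
    μ.bind (fun a => ν.map (F a)) = (μ.prod ν).map (Function.uncurry F) := by
  have hsections : ∀ᵐ a ∂μ, F a =ᵐ[ν] fun b => hF.mk _ (a, b) :=
    ae_ae_of_ae_prod hF.ae_eq_mk
  calc μ.bind (fun a => ν.map (F a))
      = μ.bind (fun a => ν.map (Function.curry (hF.mk _) a)) :=
        bind_congr_right (hsections.mono fun a ha => map_congr ha)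
    _ = (μ.prod ν).map (hF.mk _) := bind_map_eq_map_prod hF.measurable_mk
    _ = (μ.prod ν).map (Function.uncurry F) := (map_congr hF.ae_eq_mk).symm

end MeasureTheory.Measure

section CrossMoment

variable {X ι : Type*} [MeasurableSpace X] {μ : Measure X} {x y z : X → ι → ℝ}

variable (μ) in
noncomputable def crossMoment (x y : X → ι → ℝ) : Matrix ι ι ℝ :=
  Matrix.of fun i j => ∫ a, x a i * y a j ∂μ

lemma crossMoment_apply (i j : ι) : crossMoment μ x y i j = ∫ a, x a i * y a j ∂μ := rfl

lemma crossMoment_transpose : (crossMoment μ x y)ᵀ = crossMoment μ y x := by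
  ext i j
  simp only [transpose_apply, crossMoment_apply, mul_comm]

lemma crossMoment_smul_left (c : ℝ) : crossMoment μ (c • x) y = c • crossMoment μ x y := by
  ext i j
  simp only [crossMoment_apply, Matrix.smul_apply, Pi.smul_apply, smul_eq_mul, mul_assoc]
  exact integral_const_mul c _

lemma crossMoment_smul_right (c : ℝ) : crossMoment μ x (c • y) = c • crossMoment μ x y := by
  rw [← crossMoment_transpose, crossMoment_smul_left, transpose_smul, crossMoment_transpose]

lemma crossMoment_map {Y : Type*} [MeasurableSpace Y] {g : X → Y} {x y : Y → ι → ℝ}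
    (hg : AEMeasurable g μ) (hx : Measurable x) (hy : Measurable y) :
    crossMoment (μ.map g) x y = crossMoment μ (x ∘ g) (y ∘ g) := by
  ext i j
  exact integral_map hg (by fun_prop)

variable [Fintype ι]

lemma MeasureTheory.MemLp.mulVec {p : ENNReal} (A : Matrix ι ι ℝ) (hx : MemLp x p μ) :
    MemLp (fun a => A *ᵥ x a) p μ :=
  LinearMap.toContinuousLinearMap (Matrix.mulVecLin A) |>.comp_memLp' hx

lemma integrable_mul_eval (hx : MemLp x 2 μ) (hy : MemLp y 2 μ) (i j : ι) :
    Integrable (fun a => x a i * y a j) μ :=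
  (hx.eval i).integrable_mul (hy.eval j)

lemma crossMoment_add_left (hx : MemLp x 2 μ) (hy : MemLp y 2 μ) (hz : MemLp z 2 μ) :
    crossMoment μ (x + y) z = crossMoment μ x z + crossMoment μ y z := by
  ext i j
  simp only [crossMoment_apply, Matrix.add_apply, Pi.add_apply, add_mul]
  exact integral_add (integrable_mul_eval hx hz i j) (integrable_mul_eval hy hz i j)

lemma crossMoment_add_right (hx : MemLp x 2 μ) (hy : MemLp y 2 μ) (hz : MemLp z 2 μ) :
    crossMoment μ x (y + z) = crossMoment μ x y + crossMoment μ x z := by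
  rw [← crossMoment_transpose, crossMoment_add_left hy hz hx, transpose_add,
    crossMoment_transpose, crossMoment_transpose]

lemma crossMoment_mulVec_left (A : Matrix ι ι ℝ) (hx : MemLp x 2 μ) (hy : MemLp y 2 μ) :
    crossMoment μ (fun a => A *ᵥ x a) y = A * crossMoment μ x y := by
  ext i j
  simp only [crossMoment_apply, mul_apply, mulVec, dotProduct, Finset.sum_mul, mul_assoc]
  rw [integral_finsetSum _ fun k _ => (integrable_mul_eval hx hy k j).const_mul _]
  exact Finset.sum_congr rfl fun k _ => integral_const_mul _ _

lemma crossMoment_mulVec_right (B : Matrix ι ι ℝ) (hx : MemLp x 2 μ) (hy : MemLp y 2 μ) :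
    crossMoment μ x (fun a => B *ᵥ y a) = crossMoment μ x y * Bᵀ := by
  rw [← crossMoment_transpose, crossMoment_mulVec_left B hy hx, transpose_mul,
    crossMoment_transpose]

lemma crossMoment_smul_add_smul_self (a b : ℝ) (hx : MemLp x 2 μ) (hy : MemLp y 2 μ) :
    crossMoment μ (a • x + b • y) (a • x + b • y)
      = a ^ 2 • crossMoment μ x x + (a * b) • crossMoment μ x y
        + (a * b) • crossMoment μ y x + b ^ 2 • crossMoment μ y y := by
  have hax := hx.const_smul a
  have hby := hy.const_smul b
  rw [crossMoment_add_left hax hby (hax.add hby), crossMoment_add_right hax hax hby,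
    crossMoment_add_right hby hax hby]
  simp only [crossMoment_smul_left, crossMoment_smul_right, smul_smul]
  module

end CrossMoment

section ProductMeasure

variable {X Y ι : Type*} [MeasurableSpace X] [MeasurableSpace Y]
  {ψ : Measure X} {η : Measure Y}

lemma crossMoment_eq_prod_of_bind_map_eq [SFinite η] {F : X → Y → X} {x y : X → ι → ℝ}
    (hF : AEMeasurable (Function.uncurry F) (ψ.prod η))
    (hstat : ψ.bind (fun a => η.map (F a)) = ψ) (hx : Measurable x) (hy : Measurable y) :
    crossMoment ψ x y
      = crossMoment (ψ.prod η) (fun p => x (F p.1 p.2)) (fun p => y (F p.1 p.2)) := by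
  calc crossMoment ψ x y = crossMoment (ψ.bind fun a => η.map (F a)) x y := by rw [hstat]
    _ = _ := by
      rw [Measure.bind_map_eq_map_prod_of_aemeasurable hF, crossMoment_map hF hx hy]
      rfl

lemma crossMoment_prod_fst [SFinite ψ] [IsProbabilityMeasure η] {x y : X → ι → ℝ}
    (hx : Measurable x) (hy : Measurable y) :
    crossMoment (ψ.prod η) (fun p => x p.1) (fun p => y p.1) = crossMoment ψ x y := by
  calc _ = crossMoment ((ψ.prod η).map Prod.fst) x y :=
        (crossMoment_map measurable_fst.aemeasurable hx hy).symm
    _ = crossMoment ψ x y := by rw [measurePreserving_fst.map_eq]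

variable [Fintype ι] [IsFiniteMeasure ψ] [IsFiniteMeasure η] {u : X → ι → ℝ} {ξ : X × Y → ι → ℝ}

lemma crossMoment_prod_apply {x y : X × Y → ι → ℝ} (hx : MemLp x 2 (ψ.prod η))
    (hy : MemLp y 2 (ψ.prod η)) (i j : ι) :
    crossMoment (ψ.prod η) x y i j = ∫ a, ∫ b, x (a, b) i * y (a, b) j ∂η ∂ψ :=
  integral_prod _ (integrable_mul_eval hx hy i j)

lemma crossMoment_prod_eq_zero_of_integral_eq_zero (hu : MemLp (fun p => u p.1) 2 (ψ.prod η))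
    (hξ : MemLp ξ 2 (ψ.prod η)) (hmean : ∀ᵐ a ∂ψ, ∫ b, ξ (a, b) ∂η = 0) :
    crossMoment (ψ.prod η) (fun p => u p.1) ξ = 0 := by
  ext i j
  rw [crossMoment_prod_apply hu hξ]
  refine integral_eq_zero_of_ae ?_
  filter_upwards [hmean, (hξ.integrable one_le_two).prod_right_ae] with a ha hint
  rw [integral_const_mul, ← eval_integral hint.eval j, ha]
  simp

lemma crossMoment_smul_add_smul_noise (a b : ℝ) (B : Matrix ι ι ℝ)
    (hu : MemLp (fun p => u p.1) 2 (ψ.prod η)) (hξ : MemLp ξ 2 (ψ.prod η))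
    (hmean : ∀ᵐ a ∂ψ, ∫ b, ξ (a, b) ∂η = 0) :
    let C := crossMoment (ψ.prod η) (fun p => u p.1) (fun p => u p.1)
    crossMoment (ψ.prod η) (a • (fun p => u p.1) + b • (ξ + fun p => B *ᵥ u p.1))
        (a • (fun p => u p.1) + b • (ξ + fun p => B *ᵥ u p.1))
      = a ^ 2 • C + (a * b) • (C * Bᵀ) + (a * b) • (B * C)
        + b ^ 2 • (crossMoment (ψ.prod η) ξ ξ + B * C * Bᵀ) := by
  intro C
  have hBu := hu.mulVec B
  have huξ : crossMoment (ψ.prod η) (fun p => u p.1) ξ = 0 :=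
    crossMoment_prod_eq_zero_of_integral_eq_zero hu hξ hmean
  have hBuξ : crossMoment (ψ.prod η) (fun p => B *ᵥ u p.1) ξ = 0 :=
    crossMoment_prod_eq_zero_of_integral_eq_zero (u := fun a => B *ᵥ u a) hBu hξ hmean
  have hξBu : crossMoment (ψ.prod η) ξ (fun p => B *ᵥ u p.1) = 0 := by
    rw [← crossMoment_transpose, hBuξ, transpose_zero]
  have hUV : crossMoment (ψ.prod η) (fun p => u p.1) (ξ + fun p => B *ᵥ u p.1) = C * Bᵀ := by
    rw [crossMoment_add_right hu hξ hBu, huξ, zero_add, crossMoment_mulVec_right B hu hu]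
  have hVU : crossMoment (ψ.prod η) (ξ + fun p => B *ᵥ u p.1) (fun p => u p.1) = B * C := by
    rw [← crossMoment_transpose, hUV, transpose_mul, transpose_transpose, crossMoment_transpose]
  have hVV : crossMoment (ψ.prod η) (ξ + fun p => B *ᵥ u p.1) (ξ + fun p => B *ᵥ u p.1)
      = crossMoment (ψ.prod η) ξ ξ + B * C * Bᵀ := by
    rw [crossMoment_add_left hξ hBu (hξ.add hBu), crossMoment_add_right hξ hξ hBu,
      crossMoment_add_right hBu hξ hBu, hξBu, hBuξ, crossMoment_mulVec_left B hu hBu,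
      crossMoment_mulVec_right B hu hu, add_zero, zero_add, Matrix.mul_assoc]
  rw [crossMoment_smul_add_smul_self a b hu (hξ.add hBu), hUV, hVU, hVV]

end ProductMeasure

theorem stationary_distribution_covariance_general
    {d : ℕ} {Ω : Type*} [MeasurableSpace Ω]
    (η : Measure Ω) (hη : IsProbabilityMeasure η)
    -- the (affine) Bellman operator T^π f = R^π + γ P^π f
    (Rπ : Fin d → ℝ) (Pπ : Matrix (Fin d) (Fin d) ℝ)
    (γ : ℝ)
    -- the stochastic operator, an empirical Bellman operator for π
    (That : (Fin d → ℝ) → Ω → (Fin d → ℝ))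
    (hEmp : ∀ f, ∫ ω, That f ω ∂η = Rπ + γ • Pπ.mulVec f)
    (α : ℝ)
    -- the stationary distribution of the update f ↦ (1−α) f + α T̂(f,ω)
    (ψ : Measure (Fin d → ℝ)) (hψ : IsProbabilityMeasure ψ)
    (hstat : ψ.bind (fun f => η.map fun ω => (1 - α) • f + α • That f ω) = ψ)
    -- finite second moments
    (hmom : MemLp (id : (Fin d → ℝ) → (Fin d → ℝ)) 2 ψ)
    (hTmom : MemLp (fun p : (Fin d → ℝ) × Ω => That p.1 p.2) 2 (ψ.prod η))
    -- the fixed point of T^π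
    (fπ : Fin d → ℝ) (hfix : Rπ + γ • Pπ.mulVec fπ = fπ)
    -- the stationary covariance matrix Cov = E[(f_α − f^π)(f_α − f^π)ᵀ]
    (Cov : Matrix (Fin d) (Fin d) ℝ)
    (hCov : ∀ i j, Cov i j = ∫ f, (f i - fπ i) * (f j - fπ j) ∂ψ)
    -- the mean noise covariance ∫ C(f) ψ_α(df), C(f) = E_ω[ξ_ω(f) ξ_ω(f)ᵀ]
    (Cbar : Matrix (Fin d) (Fin d) ℝ)
    (hCbar : ∀ i j, Cbar i j =
      ∫ f, (∫ ω, (That f ω i - (Rπ + γ • Pπ.mulVec f) i)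
                * (That f ω j - (Rπ + γ • Pπ.mulVec f) j) ∂η) ∂ψ) :
    (1 - (1 - α) ^ 2) • Cov
      = α ^ 2 • ((γ • Pπ) * Cov * (γ • Pπ)ᵀ)
        + (α * (1 - α)) • ((γ • Pπ) * Cov)
        + (α * (1 - α)) • (Cov * (γ • Pπ)ᵀ)
        + α ^ 2 • Cbar := by
  let u : (Fin d → ℝ) → Fin d → ℝ := fun f => f - fπ
  let ξ : (Fin d → ℝ) × Ω → Fin d → ℝ := fun p => That p.1 p.2 - (Rπ + γ • Pπ *ᵥ p.1)
  have hu_meas : Measurable u := measurable_id.sub_const fπ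
  have hu : MemLp (fun p : (Fin d → ℝ) × Ω => u p.1) 2 (ψ.prod η) :=
    (hmom.sub (memLp_const fπ)).comp_fst η
  have hξ : MemLp ξ 2 (ψ.prod η) :=
    hTmom.sub (((memLp_const Rπ).add ((hmom.mulVec Pπ).const_smul γ)).comp_fst η)
  have hmean : ∀ᵐ f ∂ψ, ∫ ω, ξ (f, ω) ∂η = 0 := by
    filter_upwards [(hTmom.integrable one_le_two).prod_right_ae] with f hf
    change ∫ ω, (That f ω - (Rπ + γ • Pπ *ᵥ f)) ∂η = 0
    rw [integral_sub hf (integrable_const _), hEmp, integral_const]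
    simp
  have hCov_eq : Cov = crossMoment ψ u u := ext hCov
  have hCbar_eq : Cbar = crossMoment (ψ.prod η) ξ ξ :=
    ext fun i j => (hCbar i j).trans (crossMoment_prod_apply hξ hξ i j).symm
  -- `T^π` is affine with fixed point `fπ`, so `T^π f - fπ = γ P^π (f - fπ)`
  have hupdate : ∀ f ω, u ((1 - α) • f + α • That f ω)
      = (1 - α) • u f + α • (ξ (f, ω) + (γ • Pπ) *ᵥ u f) := by
    intro f ω
    simp only [u, ξ, Matrix.smul_mulVec, mulVec_sub]
    linear_combination (norm := module) α • hfix
  have hT_meas := hTmom.1.aemeasurable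
  have hF : AEMeasurable (fun p : (Fin d → ℝ) × Ω => (1 - α) • p.1 + α • That p.1 p.2)
      (ψ.prod η) := by
    fun_prop
  have hstat_cov := crossMoment_eq_prod_of_bind_map_eq hF hstat hu_meas hu_meas
  simp only [hupdate, ← hCov_eq] at hstat_cov
  have hexp := crossMoment_smul_add_smul_noise (1 - α) α (γ • Pπ) hu hξ hmean
  dsimp only at hexp
  rw [crossMoment_prod_fst hu_meas hu_meas, ← hCov_eq, ← hCbar_eq] at hexp
  linear_combination (norm := module) hstat_cov.trans hexp

theorem stationary_distribution_covariance
    {d : ℕ} {Ω : Type*} [MeasurableSpace Ω]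
    (η : Measure Ω) (hη : IsProbabilityMeasure η)
    -- the (affine) Bellman operator T^π f = R^π + γ P^π f
    (Rπ : Fin d → ℝ) (Pπ : Matrix (Fin d) (Fin d) ℝ)
    (hPnn : ∀ i j, 0 ≤ Pπ i j) (hProw : ∀ i, ∑ j, Pπ i j = 1)
    (γ : ℝ) (hγ0 : 0 ≤ γ) (hγ1 : γ < 1)
    -- the stochastic operator, an empirical Bellman operator for π
    (That : (Fin d → ℝ) → Ω → (Fin d → ℝ))
    (hEmp : ∀ f, ∫ ω, That f ω ∂η = Rπ + γ • Pπ.mulVec f)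
    (α : ℝ) (hα0 : 0 < α) (hα1 : α ≤ 1)
    -- the stationary distribution of the update f ↦ (1−α) f + α T̂(f,ω)
    (ψ : Measure (Fin d → ℝ)) (hψ : IsProbabilityMeasure ψ)
    (hstat : ψ.bind (fun f => η.map fun ω => (1 - α) • f + α • That f ω) = ψ)
    -- finite second moments
    (hmom : MemLp (id : (Fin d → ℝ) → (Fin d → ℝ)) 2 ψ)
    (hTmom : MemLp (fun p : (Fin d → ℝ) × Ω => That p.1 p.2) 2 (ψ.prod η))
    -- the fixed point of T^π
    (fπ : Fin d → ℝ) (hfix : Rπ + γ • Pπ.mulVec fπ = fπ)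
    -- the stationary covariance matrix Cov = E[(f_α − f^π)(f_α − f^π)ᵀ]
    (Cov : Matrix (Fin d) (Fin d) ℝ)
    (hCov : ∀ i j, Cov i j = ∫ f, (f i - fπ i) * (f j - fπ j) ∂ψ)
    -- the mean noise covariance ∫ C(f) ψ_α(df), C(f) = E_ω[ξ_ω(f) ξ_ω(f)ᵀ]
    (Cbar : Matrix (Fin d) (Fin d) ℝ)
    (hCbar : ∀ i j, Cbar i j =
      ∫ f, (∫ ω, (That f ω i - (Rπ + γ • Pπ.mulVec f) i)
                * (That f ω j - (Rπ + γ • Pπ.mulVec f) j) ∂η) ∂ψ) :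
    (1 - (1 - α) ^ 2) • Cov
      = α ^ 2 • ((γ • Pπ) * Cov * (γ • Pπ)ᵀ)
        + (α * (1 - α)) • ((γ • Pπ) * Cov)
        + (α * (1 - α)) • (Cov * (γ • Pπ)ᵀ)
        + α ^ 2 • Cbar :=
  stationary_distribution_covariance_general η hη Rπ Pπ γ That hEmp α ψ hψ hstat hmom hTmom fπ hfix
    Cov hCov Cbar hCbar
end

section
/- (Probabilistic policy improvement.) Let π be a deterministic policy and let π' be the greedy policy with respect to the action-value function Q^π (so π'(s) ∈ argmax_a Q^π(s,a) for each s, with the fixed tie-breaking rule). Then K(π, π') > 0, i.e. with positive probability the greedy policy computed from the random sampled returns G^π is exactly π'. -/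
/-!
Write `a₀` for the greedy action `π'(s)`. By the first moment method a bounded, hence integrable,
return `G^π(s,a)` is at least its mean `Q^π(s,a)` with positive probability, and at most it with
positive probability. Require the first at `(s, a₀)` and the second at every other pair; by
independence this happens with positive probability. On that event `a₀` still maximizes
`G^π(s,·)`, and any other maximizer `b` satisfies
`Q^π(s,b) ≥ G^π(s,b) ≥ G^π(s,a₀) ≥ Q^π(s,a₀)`, so it maximizes `Q^π(s,·)` as well and cannot
precede `a₀` in the tie-breaking order.
-/

open MeasureTheory

/-- The greedy policy for an action-value function `Q`, with the fixed consistent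
tie-breaking rule given by a linear order on actions (least maximizer). -/
noncomputable def greedySel {S A : Type*} [Fintype A] [Nonempty A] [LinearOrder A]
    (Q : S → A → ℝ) (s : S) : A := by
  classical
  exact (Finset.univ.filter fun a => ∀ a', Q s a' ≤ Q s a).min' (by
    obtain ⟨a, -, ha⟩ := Finset.exists_max_image Finset.univ (fun a => Q s a)
      ⟨Classical.arbitrary A, Finset.mem_univ _⟩
    exact ⟨a, Finset.mem_filter.mpr
      ⟨Finset.mem_univ _, fun a' => ha a' (Finset.mem_univ _)⟩⟩)

section Greedy

variable {S A : Type*} [Fintype A] [Nonempty A] [LinearOrder A]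

lemma le_greedySel (Q : S → A → ℝ) (s : S) (a : A) : Q s a ≤ Q s (greedySel Q s) := by
  classical
  unfold greedySel
  exact (Finset.mem_filter.mp
    (Finset.min'_mem (Finset.univ.filter fun b => ∀ a', Q s a' ≤ Q s b) _)).2 a

lemma greedySel_le_of_forall_le (Q : S → A → ℝ) (s : S) (a : A)
    (h : ∀ a', Q s a' ≤ Q s a) : greedySel Q s ≤ a := by
  classical
  unfold greedySel
  exact Finset.min'_le _ _ (Finset.mem_filter.mpr ⟨Finset.mem_univ _, h⟩)

lemma greedySel_eq_of_le_of_forall_ne_le {Q g : S → A → ℝ} {s : S}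
    (hup : Q s (greedySel Q s) ≤ g s (greedySel Q s))
    (hdown : ∀ a ≠ greedySel Q s, g s a ≤ Q s a) :
    greedySel g s = greedySel Q s := by
  set a₀ := greedySel Q s
  have hg_max : ∀ a, g s a ≤ g s a₀ := by
    intro a
    by_cases ha : a = a₀
    · rw [ha]
    · exact (hdown a ha).trans ((le_greedySel Q s a).trans hup)
  refine le_antisymm (greedySel_le_of_forall_le g s a₀ hg_max) ?_
  set b := greedySel g s
  by_cases hb : b = a₀
  · exact hb.ge
  have hQ_max : ∀ a, Q s a ≤ Q s b := fun a =>
    calc Q s a ≤ Q s a₀ := le_greedySel Q s a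
      _ ≤ g s a₀ := hup
      _ ≤ g s b := le_greedySel g s a₀
      _ ≤ Q s b := hdown b hb
  exact greedySel_le_of_forall_le Q s b hQ_max

end Greedy

lemma Measure.pi_pi_univ_pi_pos {ι κ α : Type*} [Fintype ι] [Fintype κ] [MeasurableSpace α]
    (μ : ι → κ → Measure α) [∀ i k, SigmaFinite (μ i k)] {E : ι → κ → Set α}
    (hE : ∀ i k, 0 < μ i k (E i k)) :
    0 < Measure.pi (fun i => Measure.pi (μ i)) (Set.univ.pi fun i => Set.univ.pi (E i)) := by
  simp only [Measure.pi_pi, CanonicallyOrderedAdd.prod_pos]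
  exact fun i _ k _ => hE i k

theorem probabilistic_policy_improvement_general
    {S A : Type*} [Fintype S] [Fintype A] [Nonempty A] [LinearOrder A]
    (γ Rmax : ℝ)
    -- the action-value functions Q^π, satisfying the Bellman equations
    (Qpi : (S → A) → S → A → ℝ)
    -- the return distributions G^π(s,a): mean Q^π(s,a), bounded support,
    -- mutually independent across state-action pairs (product measure below)
    (ret : (S → A) → S → A → Measure ℝ)
    (hret : ∀ π s a, IsProbabilityMeasure (ret π s a))
    (hsupp : ∀ π s a, (ret π s a) (Set.Icc 0 (Rmax / (1 - γ)))ᶜ = 0)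
    (hmean : ∀ π s a, (∫ x, x ∂ret π s a) = Qpi π s a)
    (π : S → A) :
    0 < (Measure.pi fun s => Measure.pi fun a => ret π s a)
          {g : S → A → ℝ | greedySel g = greedySel (Qpi π)} := by
  have := hret π
  let E : S → A → Set ℝ := fun s a =>
    if a = greedySel (Qpi π) s then Set.Ici (Qpi π s a) else Set.Iic (Qpi π s a)
  have hE_pos : ∀ s a, 0 < ret π s a (E s a) := by
    intro s a
    have hint : Integrable id (ret π s a) :=
      .of_mem_Icc 0 _ aemeasurable_id (measure_eq_zero_iff_ae_notMem.mp (hsupp π s a) |>.mono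
        fun _ hx => not_not.mp hx)
    simp only [E, ← hmean π s a]
    split_ifs
    · exact measure_integral_le_pos hint
    · exact measure_le_integral_pos hint
  refine (Measure.pi_pi_univ_pi_pos _ hE_pos).trans_le (measure_mono fun g hg => ?_)
  simp only [Set.mem_univ_pi] at hg
  refine funext fun s => greedySel_eq_of_le_of_forall_ne_le ?_ fun a ha => ?_
  · simpa [E] using hg s (greedySel (Qpi π) s)
  · simpa [E, ha] using hg s a

theorem probabilistic_policy_improvement
    {S A : Type*} [Fintype S] [Nonempty S] [Fintype A] [Nonempty A] [LinearOrder A]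
    (γ Rmax : ℝ) (hγ0 : 0 ≤ γ) (hγ1 : γ < 1) (hRmax : 0 ≤ Rmax)
    -- transition probabilities and mean rewards of the finite MDP
    (P : S → A → S → ℝ) (hPnn : ∀ s a s', 0 ≤ P s a s') (hProw : ∀ s a, ∑ s', P s a s' = 1)
    (rbar : S → A → ℝ) (hrbar : ∀ s a, rbar s a ∈ Set.Icc 0 Rmax)
    -- the action-value functions Q^π, satisfying the Bellman equations
    (Qpi : (S → A) → S → A → ℝ)
    (hbell : ∀ π s a, Qpi π s a = rbar s a + γ * ∑ s', P s a s' * Qpi π s' (π s'))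
    -- the return distributions G^π(s,a): mean Q^π(s,a), bounded support,
    -- mutually independent across state-action pairs (product measure below)
    (ret : (S → A) → S → A → Measure ℝ)
    (hret : ∀ π s a, IsProbabilityMeasure (ret π s a))
    (hsupp : ∀ π s a, (ret π s a) (Set.Icc 0 (Rmax / (1 - γ)))ᶜ = 0)
    (hmean : ∀ π s a, (∫ x, x ∂ret π s a) = Qpi π s a)
    (π : S → A) :
    0 < (Measure.pi fun s => Measure.pi fun a => ret π s a)
          {g : S → A → ℝ | greedySel g = greedySel (Qpi π)} :=
  probabilistic_policy_improvement_general γ Rmax Qpi ret hret hsupp hmean π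
end
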